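/- Let A ≥ 0 be a bounded operator on a complex Hilbert space H with spectral measure E, let (0,∞) = ⋃_k S_k be a countable Borel partition and (a_k) points in (0,∞) such that for some K > 1, K⁻¹ ≤ y/z ≤ K for all y, z ∈ S_k ∪ {a_k} and all k. Define φ(λ) := a_k/λ for λ ∈ S_k and B := E({0}) + ∫_{(0,∞)} φ(λ) dE(λ). Then B is invertible, commutes with A, and B A = Σ_k a_k E(S_k); hence A is topologically equivalent to the operator Σ_k a_k E(S_k) whose spectral measure is supported on {0} ∪ {a_k}. -/

import Mathlib

/-!
Put `P 0 = E {0}`, `P (k + 1) = E (S k)` (a resolution of the identity) and `T 0 = P 0`,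
`T (k + 1) = (a k)⁻¹ • A ∘ P (k + 1)`. The scalar measure of `P (k + 1) x` lives on
`[a k / K, a k * K]`, so `‖T n x‖ ≤ K ‖P n x‖` and `K⁻¹ ‖P n x‖² ≤ re ⟪x, T n x⟫`. By orthogonality
the strong sum `B⁻¹ = ∑ n, T n` converges, and it is coercive, hence invertible. It commutes with
`A` because every `E T` does, and it maps `a k • E (S k) x` to `A (E (S k) x)`; summing over `k`
gives `B (A x) = ∑ k, a k • E (S k) x`.

That `A` commutes with `E T` comes from `re ⟪x, A x⟫ = ∫ t ∂μ x`: the scalar measures of vectors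
with disjoint spectral supports add up, which kills the cross terms of `A` between the ranges of
`E T` and `E Tᶜ`.
-/

open MeasureTheory

/-- `E` is the projection-valued spectral measure of the bounded positive operator `A`
on a complex Hilbert space, with `μ x` the associated scalar Borel measures
`S ↦ ⟪x, E S x⟫`, so that `A = ∫ λ dE(λ)` (expressed through the quadratic forms
`⟪x, A x⟫ = ∫ λ dμ_x(λ)` and `‖A x‖² = ∫ λ² dμ_x(λ)`). -/
structure IsSpectralMeasureOf {H : Type*} [NormedAddCommGroup H] [InnerProductSpace ℂ H]
    [CompleteSpace H] (A : H →L[ℂ] H) (E : Set ℝ → (H →L[ℂ] H))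
    (μ : H → Measure ℝ) : Prop where
  selfAdjoint : ∀ S : Set ℝ, IsSelfAdjoint (E S)
  idem : ∀ S : Set ℝ, E S ∘L E S = E S
  inter : ∀ S S' : Set ℝ, MeasurableSet S → MeasurableSet S' →
    E S ∘L E S' = E (S ∩ S')
  empty : E ∅ = 0
  univ : E Set.univ = 1
  countablyAdditive : ∀ f : ℕ → Set ℝ, Pairwise (Function.onFun Disjoint f) →
    (∀ n, MeasurableSet (f n)) →
    ∀ x : H, HasSum (fun n => E (f n) x) (E (⋃ n, f n) x)
  suppNonneg : E (Set.Iio 0) = 0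
  mu_eq : ∀ (x : H) (S : Set ℝ), MeasurableSet S →
    μ x S = ENNReal.ofReal (Complex.re (inner ℂ x (E S x)))
  integral_id : ∀ x : H, Complex.re (inner ℂ x (A x)) = ∫ t, t ∂(μ x)
  integral_sq : ∀ x : H, ‖A x‖ ^ 2 = ∫ t, t ^ 2 ∂(μ x)

open Set
open scoped InnerProductSpace ComplexInnerProductSpace

lemma Commute.of_mul_eq_mul_mul {R : Type*} [Semigroup R] [StarMul R] {a p : R}
    (ha : IsSelfAdjoint a) (hp : IsSelfAdjoint p) (h : a * p = p * a * p) : Commute a p := by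
  have h' := congr_arg star h
  rw [star_mul, star_mul, star_mul, ha.star_eq, hp.star_eq, ← mul_assoc] at h'
  exact h.trans h'.symm

lemma IsSelfAdjoint.inner_apply_left {𝕜 H : Type*} [RCLike 𝕜] [NormedAddCommGroup H]
    [InnerProductSpace 𝕜 H] [CompleteSpace H] {A : H →L[𝕜] H} (hA : IsSelfAdjoint A) (x y : H) :
    ⟪A x, y⟫_𝕜 = ⟪x, A y⟫_𝕜 :=
  hA.isSymmetric x y

lemma Continuous.integrable_of_ae_mem_Icc {F : Type*} [NormedAddCommGroup F] {μ : Measure ℝ}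
    [IsLocallyFiniteMeasure μ] {f : ℝ → F} (hf : Continuous f) {a b : ℝ}
    (h : ∀ᵐ t ∂μ, t ∈ Icc a b) : Integrable f μ := by
  rw [← Measure.restrict_eq_self_of_ae_mem h]
  exact hf.integrableOn_Icc

section ResolutionOfIdentity

variable {𝕜 H ι : Type*} [RCLike 𝕜] [NormedAddCommGroup H] [InnerProductSpace 𝕜 H] [CompleteSpace H]

structure IsResolutionOfIdentity (P : ι → H →L[𝕜] H) : Prop where
  isSelfAdjoint : ∀ i, IsSelfAdjoint (P i)
  comp_eq_zero : Pairwise fun i j => P i ∘L P j = 0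
  hasSum : ∀ x, HasSum (fun i => P i x) x

namespace IsResolutionOfIdentity

variable {P T : ι → H →L[𝕜] H} (hP : IsResolutionOfIdentity P)
include hP

lemma apply_apply_of_ne {i j : ι} (hij : i ≠ j) (x : H) : P i (P j x) = 0 :=
  DFunLike.congr_fun (hP.comp_eq_zero hij) x

lemma orthogonalFamily :
    OrthogonalFamily 𝕜 (fun i => LinearMap.range (P i : H →ₗ[𝕜] H))
      fun i => (LinearMap.range (P i : H →ₗ[𝕜] H)).subtypeₗᵢ := by
  rintro i j hij ⟨-, x, rfl⟩ ⟨-, y, rfl⟩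
  change ⟪P i x, P j y⟫_𝕜 = 0
  rw [(hP.isSelfAdjoint i).inner_apply_left, hP.apply_apply_of_ne hij, inner_zero_right]

lemma hasSum_norm_sq (x : H) : HasSum (fun i => ‖P i x‖ ^ 2) (‖x‖ ^ 2) := by
  refine ((hP.hasSum x).norm.pow 2).congr fun s => ?_
  simpa using hP.orthogonalFamily.norm_sum (fun i => ⟨P i x, LinearMap.mem_range_self _ x⟩) s

variable {C : ℝ}

lemma summable_of_norm_le (hPT : ∀ i x, P i (T i x) = T i x)
    (hT : ∀ i x, ‖T i x‖ ≤ C * ‖P i x‖) (x : H) : Summable fun i => T i x := by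
  have hmem i : T i x ∈ LinearMap.range (P i : H →ₗ[𝕜] H) := hPT i x ▸ LinearMap.mem_range_self _ _
  refine (hP.orthogonalFamily.summable_iff_norm_sq_summable fun i => ⟨T i x, hmem i⟩).2 ?_
  refine ((hP.hasSum_norm_sq x).summable.mul_left (C ^ 2)).of_nonneg_of_le (fun _ => sq_nonneg _)
    fun i => ?_
  calc ‖T i x‖ ^ 2 ≤ (C * ‖P i x‖) ^ 2 := pow_le_pow_left₀ (norm_nonneg _) (hT i x) 2
    _ = C ^ 2 * ‖P i x‖ ^ 2 := mul_pow _ _ _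

lemma hasSum_apply_apply (hT : ∀ i x, ‖T i x‖ ≤ C * ‖P i x‖) (j : ι) (x : H) :
    HasSum (fun i => T i (P j x)) (T j (P j x)) :=
  hasSum_single j fun i hij => norm_le_zero_iff.mp <| by
    simpa [hP.apply_apply_of_ne hij] using hT i (P j x)

/-- The strong sum `∑ i, T i` is continuous by Banach–Steinhaus, and invertible since it is
coercive. -/
theorem exists_continuousLinearEquiv_hasSum [Countable ι]
    (hPT : ∀ i x, P i (T i x) = T i x) (hT : ∀ i x, ‖T i x‖ ≤ C * ‖P i x‖) {c : ℝ} (hc : 0 < c)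
    (hcT : ∀ i x, c * ‖P i x‖ ^ 2 ≤ RCLike.re ⟪x, T i x⟫_𝕜) :
    ∃ e : H ≃L[𝕜] H, ∀ x, HasSum (fun i => T i x) (e x) := by
  have hsum x := (hP.summable_of_norm_le hPT hT x).hasSum
  let B := continuousLinearMapOfTendsto (fun s : Finset ι => ∑ i ∈ s, T i)
    (tendsto_pi_nhds.2 fun x => by simp only [FunLike.coe_sum, Finset.sum_apply]; exact hsum x)
  have hB x : HasSum (fun i => T i x) (B x) := hsum x
  have hcoercive x : ‖x‖ ^ 2 * c ≤ ‖⟪B x, x⟫_𝕜‖ := by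
    have hre : HasSum (fun i => RCLike.re ⟪x, T i x⟫_𝕜) (RCLike.re ⟪x, B x⟫_𝕜) :=
      RCLike.hasSum_re 𝕜 ((hB x).mapL (innerSL 𝕜 x))
    calc ‖x‖ ^ 2 * c = c * ‖x‖ ^ 2 := mul_comm _ _
      _ ≤ RCLike.re ⟪x, B x⟫_𝕜 :=
          hasSum_le (fun i => hcT i x) ((hP.hasSum_norm_sq x).mul_left c) hre
      _ ≤ ‖⟪B x, x⟫_𝕜‖ := by rw [inner_re_symm]; exact RCLike.re_le_norm _
  obtain ⟨u, hu⟩ := B.isUnit_of_forall_le_norm_inner_map (c := ⟨c, hc.le⟩) hc hcoercive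
  exact ⟨.ofUnit u, fun x => by convert hB x using 1; exact DFunLike.congr_fun hu x⟩

end IsResolutionOfIdentity

end ResolutionOfIdentity

namespace IsSpectralMeasureOf

variable {H : Type*} [NormedAddCommGroup H] [InnerProductSpace ℂ H] [CompleteSpace H]
  {A : H →L[ℂ] H} {E : Set ℝ → H →L[ℂ] H} {μ : H → Measure ℝ} (hE : IsSpectralMeasureOf A E μ)
  {T T' : Set ℝ}
include hE

lemma apply_apply (hT : MeasurableSet T) (hT' : MeasurableSet T') (x : H) :
    E T (E T' x) = E (T ∩ T') x :=
  DFunLike.congr_fun (hE.inter T T' hT hT') x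

lemma apply_apply_self (x : H) : E T (E T x) = E T x :=
  DFunLike.congr_fun (hE.idem T) x

lemma apply_apply_of_disjoint (hT : MeasurableSet T) (hT' : MeasurableSet T') (hd : Disjoint T T')
    (x : H) : E T (E T' x) = 0 := by
  rw [hE.apply_apply hT hT', hd.inter_eq, hE.empty, zero_apply]

lemma norm_apply_sq (x : H) : ‖E T x‖ ^ 2 = ⟪x, E T x⟫.re := by
  rw [← inner_self_eq_norm_sq (𝕜 := ℂ), RCLike.re_to_complex, (hE.selfAdjoint T).inner_apply_left,
    hE.apply_apply_self]

lemma measure_apply (hT : MeasurableSet T) (x : H) : μ x T = ENNReal.ofReal (‖E T x‖ ^ 2) := by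
  rw [hE.mu_eq x T hT, hE.norm_apply_sq]

lemma measure_eq_zero_iff (hT : MeasurableSet T) {x : H} : μ x T = 0 ↔ E T x = 0 := by
  rw [hE.measure_apply hT, ENNReal.ofReal_eq_zero, sq_nonpos_iff, norm_eq_zero]

lemma isFiniteMeasure (x : H) : IsFiniteMeasure (μ x) :=
  ⟨by rw [hE.measure_apply MeasurableSet.univ]; exact ENNReal.ofReal_lt_top⟩

lemma measureReal_univ (x : H) : (μ x).real Set.univ = ‖x‖ ^ 2 := by
  rw [measureReal_def, hE.measure_apply MeasurableSet.univ, hE.univ,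
    one_apply_eq_self, ENNReal.toReal_ofReal (sq_nonneg _)]

/-- The remainder `x - E T x - E Tᶜ x` is killed by `E T` and by `E Tᶜ`, so its scalar measure
vanishes. -/
lemma add_apply_compl (hT : MeasurableSet T) (x : H) : E T x + E Tᶜ x = x := by
  set z := x - (E T x + E Tᶜ x)
  have hTz : E T z = 0 := by
    simp [z, hE.apply_apply_self, hE.apply_apply_of_disjoint hT hT.compl disjoint_compl_right]
  have hTcz : E Tᶜ z = 0 := by
    simp [z, hE.apply_apply_self, hE.apply_apply_of_disjoint hT.compl hT disjoint_compl_left]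
  have hz : μ z Set.univ = 0 := by
    rw [← union_compl_self T]
    exact measure_union_null ((hE.measure_eq_zero_iff hT).2 hTz)
      ((hE.measure_eq_zero_iff hT.compl).2 hTcz)
  rw [hE.measure_eq_zero_iff MeasurableSet.univ, hE.univ, one_apply_eq_self,
    sub_eq_zero] at hz
  exact hz.symm

lemma apply_Ici_zero (x : H) : E (Ici 0) x = x := by
  have h := hE.add_apply_compl (measurableSet_Iio (a := (0 : ℝ))) x
  rwa [hE.suppNonneg, zero_apply, zero_add, compl_Iio] at h

lemma isResolutionOfIdentity {S : ℕ → Set ℝ} (hmeas : ∀ n, MeasurableSet (S n))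
    (hdisj : Pairwise (Function.onFun Disjoint S)) (hcover : ⋃ n, S n = Ici 0) :
    IsResolutionOfIdentity fun n => E (S n) where
  isSelfAdjoint n := hE.selfAdjoint (S n)
  comp_eq_zero i j hij := by
    change E (S i) ∘L E (S j) = 0
    rw [hE.inter _ _ (hmeas i) (hmeas j), (hdisj hij).inter_eq, hE.empty]
  hasSum x := by simpa [hcover, hE.apply_Ici_zero] using hE.countablyAdditive S hdisj hmeas x

lemma ae_mem_apply (hT : MeasurableSet T) (x : H) : ∀ᵐ t ∂μ (E T x), t ∈ T :=
  ae_iff.2 <| (hE.measure_eq_zero_iff hT.compl).2 <|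
    hE.apply_apply_of_disjoint hT.compl hT disjoint_compl_left x

lemma mul_norm_sq_le_re_inner_map {x : H} {m M : ℝ} (hx : ∀ᵐ t ∂μ x, t ∈ Icc m M) :
    m * ‖x‖ ^ 2 ≤ ⟪x, A x⟫.re := by
  have := hE.isFiniteMeasure x
  calc m * ‖x‖ ^ 2 = ∫ _, m ∂μ x := by simp [hE.measureReal_univ, mul_comm]
    _ ≤ ∫ t, t ∂μ x := integral_mono_ae (integrable_const m)
        (continuous_id.integrable_of_ae_mem_Icc hx) (hx.mono fun _ ht => ht.1)
    _ = ⟪x, A x⟫.re := (hE.integral_id x).symm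

lemma norm_map_le {x : H} {M : ℝ} (hM : 0 ≤ M) (hx : ∀ᵐ t ∂μ x, t ∈ Icc 0 M) :
    ‖A x‖ ≤ M * ‖x‖ := by
  have := hE.isFiniteMeasure x
  refine (pow_le_pow_iff_left₀ (norm_nonneg _) (by positivity) two_ne_zero).1 ?_
  calc ‖A x‖ ^ 2 = ∫ t, t ^ 2 ∂μ x := hE.integral_sq x
    _ ≤ ∫ _, M ^ 2 ∂μ x := integral_mono_ae ((continuous_pow 2).integrable_of_ae_mem_Icc hx)
        (integrable_const _) (hx.mono fun _ ht => pow_le_pow_left₀ ht.1 ht.2 2)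
    _ = (M * ‖x‖) ^ 2 := by simp [hE.measureReal_univ, mul_pow, mul_comm]

lemma map_apply_singleton_zero (x : H) : A (E {0} x) = 0 := by
  have h := hE.norm_map_le le_rfl <| (hE.ae_mem_apply (measurableSet_singleton 0) x).mono
    fun t ht => by rwa [Icc_self]
  rwa [zero_mul, norm_le_zero_iff] at h

lemma measure_Ioi_eq_zero {M : ℝ} (hM : ‖A‖ < M) (x : H) : μ x (Ioi M) = 0 := by
  rw [← iUnion_Ioc_eq_Ioi_self_iff.2 fun t _ => exists_nat_ge t]
  refine measure_iUnion_null fun n => (hE.measure_eq_zero_iff measurableSet_Ioc).2 ?_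
  set y := E (Ioc M n) x
  have hlow := hE.mul_norm_sq_le_re_inner_map <|
    (hE.ae_mem_apply (measurableSet_Ioc (a := M) (b := n)) x).mono
      fun _ ht => Ioc_subset_Icc_self ht
  have hup : ⟪y, A y⟫.re ≤ ‖A‖ * ‖y‖ ^ 2 := calc
    ⟪y, A y⟫.re ≤ ‖y‖ * ‖A y‖ := (Complex.re_le_norm _).trans (norm_inner_le_norm _ _)
    _ ≤ ‖y‖ * (‖A‖ * ‖y‖) := by gcongr; exact A.le_opNorm y
    _ = ‖A‖ * ‖y‖ ^ 2 := by ring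
  have : ‖y‖ ^ 2 ≤ 0 := by nlinarith
  rwa [sq_nonpos_iff, norm_eq_zero] at this

lemma ae_mem_Icc_norm (x : H) : ∀ᵐ t ∂μ x, t ∈ Icc 0 (‖A‖ + 1) := by
  have hneg : μ x (Iio 0) = 0 := by
    rw [hE.measure_eq_zero_iff measurableSet_Iio, hE.suppNonneg, zero_apply]
  refine ae_iff.2 <| measure_mono_null (fun t ht => ?_)
    (measure_union_null hneg (hE.measure_Ioi_eq_zero (lt_add_one _) x))
  simp only [mem_Icc, not_and_or, not_le] at ht
  exact ht

lemma integrable_id (x : H) : Integrable (fun t => t) (μ x) :=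
  have := hE.isFiniteMeasure x
  continuous_id.integrable_of_ae_mem_Icc (hE.ae_mem_Icc_norm x)

lemma measure_add_of_disjoint (hT : MeasurableSet T) (hT' : MeasurableSet T') (hd : Disjoint T T')
    (x y : H) : μ (E T x + E T' y) = μ (E T x) + μ (E T' y) := by
  ext U hU
  have horth : ⟪E U (E T x), E U (E T' y)⟫ = 0 := by
    rw [hE.apply_apply hU hT, hE.apply_apply hU hT', (hE.selfAdjoint _).inner_apply_left,
      hE.apply_apply_of_disjoint (hU.inter hT) (hU.inter hT')
        (hd.mono inter_subset_right inter_subset_right), inner_zero_right]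
  rw [Measure.add_apply, hE.measure_apply hU, hE.measure_apply hU, hE.measure_apply hU, map_add,
    ← ENNReal.ofReal_add (sq_nonneg _) (sq_nonneg _), sq, sq, sq,
    norm_add_sq_eq_norm_sq_add_norm_sq_of_inner_eq_zero _ _ horth]

lemma re_inner_map_eq_zero_of_disjoint (hA : IsSelfAdjoint A) (hT : MeasurableSet T)
    (hT' : MeasurableSet T') (hd : Disjoint T T') (x y : H) :
    ⟪E T x, A (E T' y)⟫.re = 0 := by
  set u := E T x
  set v := E T' y
  have hsplit : ⟪u + v, A (u + v)⟫.re = ⟪u, A u⟫.re + ⟪v, A v⟫.re := by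
    rw [hE.integral_id, hE.integral_id, hE.integral_id, hE.measure_add_of_disjoint hT hT' hd,
      integral_add_measure (hE.integrable_id u) (hE.integrable_id v)]
  have hsymm : ⟪v, A u⟫.re = ⟪u, A v⟫.re := by
    rw [← hA.inner_apply_left, ← inner_conj_symm, Complex.conj_re]
  rw [map_add, inner_add_left, inner_add_right, inner_add_right] at hsplit
  simp only [Complex.add_re, hsymm] at hsplit
  linarith

lemma inner_map_eq_zero_of_disjoint (hA : IsSelfAdjoint A) (hT : MeasurableSet T)
    (hT' : MeasurableSet T') (hd : Disjoint T T') (x y : H) : ⟪E T x, A (E T' y)⟫ = 0 := by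
  refine Complex.ext (hE.re_inner_map_eq_zero_of_disjoint hA hT hT' hd x y) ?_
  have h := hE.re_inner_map_eq_zero_of_disjoint hA hT hT' hd (Complex.I • x) y
  rw [map_smul, inner_smul_left, Complex.conj_I] at h
  simpa [Complex.mul_re] using h

lemma apply_map_apply_self (hA : IsSelfAdjoint A) (hT : MeasurableSet T) (x : H) :
    E T (A (E T x)) = A (E T x) := by
  set y := A (E T x)
  have hcompl : E Tᶜ y = 0 := by
    rw [← norm_eq_zero, ← sq_eq_zero_iff, hE.norm_apply_sq, hA.inner_apply_left,
      hE.inner_map_eq_zero_of_disjoint hA hT hT.compl disjoint_compl_right, Complex.zero_re]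
  simpa [hcompl] using hE.add_apply_compl hT y

lemma map_apply_comm (hA : IsSelfAdjoint A) (hT : MeasurableSet T) (x : H) :
    A (E T x) = E T (A x) :=
  DFunLike.congr_fun (Commute.of_mul_eq_mul_mul hA (hE.selfAdjoint T)
    (ContinuousLinearMap.ext fun x => (hE.apply_map_apply_self hA hT x).symm)).eq x

end IsSpectralMeasureOf

section Discretization

variable {H : Type*} [NormedAddCommGroup H] [InnerProductSpace ℂ H] [CompleteSpace H]
  {A : H →L[ℂ] H} {E : Set ℝ → H →L[ℂ] H} {μ : H → Measure ℝ} {S : ℕ → Set ℝ} {a : ℕ → ℝ}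
  {K : ℝ}

def zeroCons (S : ℕ → Set ℝ) : ℕ → Set ℝ
  | 0 => {0}
  | k + 1 => S k

/-- The blocks of `B⁻¹ = E {0} + ∑ k, (a k)⁻¹ A E (S k)`, indexed like `zeroCons S`. -/
noncomputable def inverseBlocks (A : H →L[ℂ] H) (E : Set ℝ → H →L[ℂ] H) (S : ℕ → Set ℝ)
    (a : ℕ → ℝ) : ℕ → H →L[ℂ] H
  | 0 => E {0}
  | k + 1 => (a k)⁻¹ • (A ∘L E (S k))

lemma measurableSet_zeroCons (hS : ∀ k, MeasurableSet (S k)) (n : ℕ) :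
    MeasurableSet (zeroCons S n) := by
  cases n with
  | zero => exact measurableSet_singleton 0
  | succ k => exact hS k

lemma pairwise_disjoint_zeroCons (hdisj : Pairwise (Function.onFun Disjoint S))
    (hpos : ∀ k, S k ⊆ Ioi 0) : Pairwise (Function.onFun Disjoint (zeroCons S)) := by
  rintro (_ | i) (_ | j) hij
  · exact absurd rfl hij
  · exact disjoint_singleton_left.2 fun h => self_notMem_Ioi (hpos j h)
  · exact disjoint_singleton_right.2 fun h => self_notMem_Ioi (hpos i h)
  · exact hdisj fun h => hij (congrArg (· + 1) h)

lemma iUnion_zeroCons (hcover : ⋃ k, S k = Ioi 0) : ⋃ n, zeroCons S n = Ici 0 := by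
  rw [← union_iUnion_nat_succ]
  simp only [zeroCons, hcover, singleton_union, Ioi_insert]

namespace IsSpectralMeasureOf

variable (hE : IsSpectralMeasureOf A E μ) (hSmeas : ∀ k, MeasurableSet (S k))
include hE hSmeas

lemma isResolutionOfIdentity_zeroCons (hSdisj : Pairwise (Function.onFun Disjoint S))
    (hScover : ⋃ k, S k = Ioi 0) : IsResolutionOfIdentity fun n => E (zeroCons S n) :=
  hE.isResolutionOfIdentity (measurableSet_zeroCons hSmeas)
    (pairwise_disjoint_zeroCons hSdisj fun k => hScover ▸ subset_iUnion S k)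
    (iUnion_zeroCons hScover)

lemma hasSum_map_apply (hSdisj : Pairwise (Function.onFun Disjoint S))
    (hScover : ⋃ k, S k = Ioi 0) (x : H) : HasSum (fun k => A (E (S k) x)) (A x) := by
  have h := ((hE.isResolutionOfIdentity_zeroCons hSmeas hSdisj hScover).hasSum x).mapL A
  rw [← hasSum_nat_add_iff' 1] at h
  simpa [zeroCons, hE.map_apply_singleton_zero] using h

lemma norm_inverseBlocks_le (ha : ∀ k, 0 < a k) (hK : 1 ≤ K)
    (hSK : ∀ k, S k ⊆ Icc (a k / K) (a k * K)) (n : ℕ) (x : H) :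
    ‖inverseBlocks A E S a n x‖ ≤ K * ‖E (zeroCons S n) x‖ := by
  cases n with
  | zero => exact le_mul_of_one_le_left (norm_nonneg _) hK
  | succ k =>
    have hK0 : 0 < K := zero_lt_one.trans_le hK
    have hmap := hE.norm_map_le (M := a k * K) (mul_pos (ha k) hK0).le <|
      (hE.ae_mem_apply (hSmeas k) x).mono fun t ht =>
        ⟨(div_pos (ha k) hK0).le.trans (hSK k ht).1, (hSK k ht).2⟩
    calc ‖(a k)⁻¹ • A (E (S k) x)‖ = (a k)⁻¹ * ‖A (E (S k) x)‖ := by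
          rw [norm_smul, norm_inv, Real.norm_of_nonneg (ha k).le]
      _ ≤ (a k)⁻¹ * (a k * K * ‖E (S k) x‖) :=
          mul_le_mul_of_nonneg_left hmap (inv_nonneg.2 (ha k).le)
      _ = K * ‖E (S k) x‖ := by
          rw [← mul_assoc, ← mul_assoc, inv_mul_cancel₀ (ha k).ne', one_mul]

variable (hA : IsSelfAdjoint A)
include hA

lemma apply_inverseBlocks (n : ℕ) (x : H) :
    E (zeroCons S n) (inverseBlocks A E S a n x) = inverseBlocks A E S a n x := by
  cases n with
  | zero => exact hE.apply_apply_self x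
  | succ k => simp [zeroCons, inverseBlocks, hE.apply_map_apply_self hA (hSmeas k)]

lemma inverseBlocks_map_comm (n : ℕ) (x : H) :
    inverseBlocks A E S a n (A x) = A (inverseBlocks A E S a n x) := by
  cases n with
  | zero => exact (hE.map_apply_comm hA (measurableSet_singleton 0) x).symm
  | succ k => simp [inverseBlocks, hE.map_apply_comm hA (hSmeas k)]

lemma inv_mul_norm_sq_le_re_inner_inverseBlocks (ha : ∀ k, 0 < a k) (hK : 1 ≤ K)
    (hSK : ∀ k, S k ⊆ Icc (a k / K) (a k * K)) (n : ℕ) (x : H) :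
    K⁻¹ * ‖E (zeroCons S n) x‖ ^ 2 ≤ ⟪x, inverseBlocks A E S a n x⟫.re := by
  cases n with
  | zero =>
    rw [show inverseBlocks A E S a 0 = E (zeroCons S 0) from rfl, ← hE.norm_apply_sq]
    exact mul_le_of_le_one_left (sq_nonneg _) (inv_le_one_of_one_le₀ hK)
  | succ k =>
    have hlow := hE.mul_norm_sq_le_re_inner_map <|
      (hE.ae_mem_apply (hSmeas k) x).mono fun _ ht => hSK k ht
    have hinner : ⟪x, A (E (S k) x)⟫ = ⟪E (S k) x, A (E (S k) x)⟫ := by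
      conv_lhs => rw [← hE.apply_map_apply_self hA (hSmeas k) x]
      exact ((hE.selfAdjoint _).inner_apply_left _ _).symm
    calc K⁻¹ * ‖E (zeroCons S (k + 1)) x‖ ^ 2 = (a k)⁻¹ * (a k / K * ‖E (S k) x‖ ^ 2) := by
          simp only [zeroCons]; field_simp [(ha k).ne']
      _ ≤ (a k)⁻¹ * ⟪E (S k) x, A (E (S k) x)⟫.re :=
          mul_le_mul_of_nonneg_left hlow (inv_nonneg.2 (ha k).le)
      _ = _ := by simp [inverseBlocks, hinner]

theorem exists_continuousLinearEquiv_inverse (hSdisj : Pairwise (Function.onFun Disjoint S))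
    (hScover : ⋃ k, S k = Ioi 0) (ha : ∀ k, 0 < a k) (hK : 1 ≤ K)
    (hSK : ∀ k, S k ⊆ Icc (a k / K) (a k * K)) :
    ∃ e : H ≃L[ℂ] H, (∀ x, e (A x) = A (e x)) ∧ ∀ k x, e (a k • E (S k) x) = A (E (S k) x) := by
  have hP := hE.isResolutionOfIdentity_zeroCons hSmeas hSdisj hScover
  have hT := hE.norm_inverseBlocks_le hSmeas ha hK hSK
  obtain ⟨e, he⟩ := hP.exists_continuousLinearEquiv_hasSum
    (hE.apply_inverseBlocks hSmeas hA) hT (inv_pos.2 (zero_lt_one.trans_le hK))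
    (hE.inv_mul_norm_sq_le_re_inner_inverseBlocks hSmeas hA ha hK hSK)
  refine ⟨e, fun x => (he (A x)).unique ?_, fun k x => (he _).unique ?_⟩
  · simpa only [hE.inverseBlocks_map_comm hSmeas hA] using (he x).mapL A
  · simpa [zeroCons, inverseBlocks, hE.apply_apply_self, smul_smul, inv_mul_cancel₀ (ha k).ne']
      using hP.hasSum_apply_apply hT (k + 1) (a k • x)

end IsSpectralMeasureOf

end Discretization

/-- Let `A ≥ 0` be bounded on a complex Hilbert space with spectral measure `E`, let
`(0,∞) = ⋃ k, S k` be a countable Borel partition and `(a k)` points of `(0,∞)` such that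
for some `K > 1` all ratios of elements of `S k ∪ {a k}` lie in `[K⁻¹, K]`. Then the
operator `B = E({0}) + ∫_{(0,∞)} (a_k/λ) dE(λ)` is invertible, commutes with `A`, and
`B A = Σ_k a_k E(S k)`; hence `A` is topologically equivalent to `Σ_k a_k E(S k)`,
whose spectral measure is supported on `{0} ∪ {a k}`. -/
theorem topologically_equivalent_to_discretized
    {H : Type*} [NormedAddCommGroup H] [InnerProductSpace ℂ H] [CompleteSpace H]
    (A : H →L[ℂ] H) (hA : A.IsPositive)
    (E : Set ℝ → (H →L[ℂ] H)) (μmeas : H → Measure ℝ)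
    (hE : IsSpectralMeasureOf A E μmeas)
    (S : ℕ → Set ℝ) (hSmeas : ∀ k, MeasurableSet (S k))
    (hSdisj : Pairwise (Function.onFun Disjoint S))
    (hScover : (⋃ k, S k) = Set.Ioi (0 : ℝ))
    (a : ℕ → ℝ) (ha : ∀ k, 0 < a k)
    (K : ℝ) (hK : 1 < K)
    (hlog : ∀ k, ∀ y ∈ S k ∪ {a k}, ∀ z ∈ S k ∪ {a k}, K⁻¹ ≤ y / z ∧ y / z ≤ K) :
    ∃ B : H →L[ℂ] H,
      (∃ B' : H →L[ℂ] H, B ∘L B' = 1 ∧ B' ∘L B = 1) ∧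
      B ∘L A = A ∘L B ∧
      (∀ x : H, HasSum (fun k => a k • E (S k) x) ((B ∘L A) x)) ∧
      ∃ (U V : H ≃L[ℂ] H), ∀ x : H, (B ∘L A) x = V (A (U x)) := by
  have hSK : ∀ k, S k ⊆ Icc (a k / K) (a k * K) := fun k t ht => by
    obtain ⟨h1, h2⟩ := hlog k t (Or.inl ht) (a k) (Or.inr rfl)
    rw [le_div_iff₀ (ha k)] at h1
    rw [div_le_iff₀ (ha k)] at h2
    exact ⟨by rwa [div_eq_inv_mul], by rwa [mul_comm]⟩
  obtain ⟨e, he_comm, he_block⟩ :=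
    hE.exists_continuousLinearEquiv_inverse hSmeas hA.isSelfAdjoint hSdisj hScover ha hK.le hSK
  have hsymm k x : e.symm (A (E (S k) x)) = a k • E (S k) x :=
    e.symm_apply_eq.2 (he_block k x).symm
  refine ⟨e.symm, ⟨e, ?_, ?_⟩, ?_, fun x => ?_, .refl ℂ H, e.symm, fun x => rfl⟩
  · ext x; simp
  · ext x; simp
  · ext x
    exact e.symm_apply_eq.2 (by simp [he_comm])
  · simpa [hsymm] using
      (hE.hasSum_map_apply hSmeas hSdisj hScover x).mapL (e.symm : H →L[ℂ] H)
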